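/- arXiv:math/0502025 — 6 statements merged into one kernel-verified Lean document; each statement's English description precedes it below -/
import Mathlib

section
/- For all nonnegative reals h_0,...,h_d with ∑ h_k = n, every y ∈ ℝ, and every x ∈ ℝ^{d+1} with 0 ≤ x_k ≤ h_k and ∑_{k=0}^d ((k+3)/4)·x_k = n, one has ∑_{k=0}^d x_k ≤ ∑_{k=0}^d h_k · max{y, 1 − ((k−1)/4)·y}. -/
open Finset

/-- weak LP duality estimate, equation (6) of the paper:
for nonnegative `h_0, …, h_d` with `∑ h_k = n`, every `y ∈ ℝ` and every feasible
`x` (i.e. `0 ≤ x_k ≤ h_k` and `∑ ((k+3)/4)·x_k = n`) one has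
`∑ x_k ≤ ∑ h_k · max {y, 1 − ((k−1)/4)·y}`. -/
theorem randomEdge_weak_duality (d : ℕ) (h : ℕ → ℝ) (n : ℝ)
    (hh : ∀ k ≤ d, 0 ≤ h k)
    (hn : n = ∑ k ∈ range (d + 1), h k)
    (y : ℝ) (x : ℕ → ℝ)
    (hbox : ∀ k ≤ d, 0 ≤ x k ∧ x k ≤ h k)
    (hconstr : ∑ k ∈ range (d + 1), ((k : ℝ) + 3) / 4 * x k = n) :
    ∑ k ∈ range (d + 1), x k ≤
      ∑ k ∈ range (d + 1), h k * max y (1 - ((k : ℝ) - 1) / 4 * y) := by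
  have key : ∑ k ∈ range (d + 1), x k
      = ∑ k ∈ range (d + 1),
          (x k * (1 - ((k : ℝ) - 1) / 4 * y) + (h k - x k) * y) := by
    have e : ∀ k ∈ range (d + 1),
        x k * (1 - ((k : ℝ) - 1) / 4 * y) + (h k - x k) * y
          = x k + (y * h k - y * (((k : ℝ) + 3) / 4 * x k)) := fun k _ => by ring
    rw [Finset.sum_congr rfl e, Finset.sum_add_distrib, Finset.sum_sub_distrib,
      ← Finset.mul_sum, ← Finset.mul_sum, hconstr, ← hn]
    ring
  rw [key]
  apply Finset.sum_le_sum
  intro k hk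
  have hk' : k ≤ d := Nat.lt_succ_iff.mp (Finset.mem_range.mp hk)
  obtain ⟨hx0, hxh⟩ := hbox k hk'
  have h1 : x k * (1 - ((k : ℝ) - 1) / 4 * y)
      ≤ x k * max y (1 - ((k : ℝ) - 1) / 4 * y) :=
    mul_le_mul_of_nonneg_left (le_max_right _ _) hx0
  have h2 : (h k - x k) * y ≤ (h k - x k) * max y (1 - ((k : ℝ) - 1) / 4 * y) :=
    mul_le_mul_of_nonneg_left (le_max_left _ _) (by linarith)
  nlinarith [h1, h2]
end

section
/- Let (h_0,...,h_d) be nonnegative reals with h_k = h_{d−k}, h_0 ≤ ... ≤ h_{⌊d/2⌋}, and n = ∑ h_k. For d ≥ 144, ∑_{k=0}^{⌊4√d−3⌋} h_k · (1 − (k−1)/(4√d)) + ∑_{k=⌊4√d−3⌋+1}^{d} h_k/√d ≤ 13n/√d. -/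
open Finset

/-- final estimate of Section 2: for a nonnegative, symmetric and
unimodal `h`-vector with `n = ∑ h_k` and `d ≥ 144`,
`∑_{k=0}^{⌊4√d−3⌋} h_k·(1 − (k−1)/(4√d)) + ∑_{k=⌊4√d−3⌋+1}^{d} h_k/√d ≤ 13n/√d`. -/
theorem randomEdge_final_estimate (d : ℕ) (h : ℕ → ℝ) (n : ℝ)
    (hh : ∀ k ≤ d, 0 ≤ h k)
    (hsym : ∀ k ≤ d, h k = h (d - k))
    (hmono : ∀ j k : ℕ, j ≤ k → k ≤ d / 2 → h j ≤ h k)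
    (hn : n = ∑ k ∈ range (d + 1), h k)
    (hd : 144 ≤ d) :
    (∑ k ∈ range (⌊4 * Real.sqrt d - 3⌋₊ + 1),
        h k * (1 - ((k : ℝ) - 1) / (4 * Real.sqrt d))) +
      (∑ k ∈ Icc (⌊4 * Real.sqrt d - 3⌋₊ + 1) d, h k / Real.sqrt d) ≤
    13 * n / Real.sqrt d := by
  set s := Real.sqrt d with hs_def
  have hd0 : (0:ℝ) ≤ (d:ℝ) := by positivity
  have hsq : s ^ 2 = (d:ℝ) := Real.sq_sqrt hd0
  have hs12 : (12:ℝ) ≤ s := by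
    have h1 : Real.sqrt 144 ≤ s := Real.sqrt_le_sqrt (by exact_mod_cast hd)
    rwa [show (144:ℝ) = 12 ^ 2 by norm_num, Real.sqrt_sq (by norm_num)] at h1
  have hs0 : (0:ℝ) < s := by linarith
  set m := ⌊4 * s - 3⌋₊ with hm_def
  have hm_le : (m:ℝ) ≤ 4 * s - 3 := Nat.floor_le (by linarith)
  have h2m : 2 * m ≤ d := by
    have : (2 * m : ℝ) ≤ (d:ℝ) := by push_cast; nlinarith
    exact_mod_cast this
  have hmd2 : m ≤ d / 2 := by omega
  have hhm0 : 0 ≤ h m := hh m (by omega)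
  -- key lower bound on n
  have hkey : ∀ k, m ≤ k → k ≤ d - m → h m ≤ h k := by
    intro k hk1 hk2
    by_cases hc : k ≤ d / 2
    · exact hmono m k hk1 hc
    · push_neg at hc
      have hkd : k ≤ d := le_trans hk2 (Nat.sub_le d m)
      rw [hsym k hkd]
      exact hmono m (d - k) (by omega) (by omega)
  have hn_lb : ((d:ℝ) - 2 * m + 1) * h m ≤ n := by
    have h1 : ∑ _k ∈ Icc m (d - m), h m ≤ ∑ k ∈ Icc m (d - m), h k :=
      Finset.sum_le_sum (fun k hk => hkey k (mem_Icc.mp hk).1 (mem_Icc.mp hk).2)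
    have h2 : ∑ k ∈ Icc m (d - m), h k ≤ ∑ k ∈ range (d + 1), h k := by
      apply Finset.sum_le_sum_of_subset_of_nonneg
      · intro x hx
        simp only [Finset.mem_Icc] at hx
        simp only [Finset.mem_range]
        omega
      · intro i hi _
        exact hh i (by simp only [Finset.mem_range] at hi; omega)
    have h3 : ∑ _k ∈ Icc m (d - m), h m = ((d - 2 * m + 1 : ℕ) : ℝ) * h m := by
      rw [Finset.sum_const, Nat.card_Icc, nsmul_eq_mul]
      congr 1
      congr 1
      omega
    have h4 : ((d - 2 * m + 1 : ℕ) : ℝ) = (d:ℝ) - 2 * m + 1 := by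
      push_cast [Nat.cast_sub h2m]
      ring
    rw [hn]
    calc ((d:ℝ) - 2 * m + 1) * h m = ∑ _k ∈ Icc m (d - m), h m := by rw [h3, h4]
      _ ≤ ∑ k ∈ Icc m (d - m), h k := h1
      _ ≤ ∑ k ∈ range (d + 1), h k := h2
  have hhm_ub : s * (s - 8) * h m ≤ n := by nlinarith
  have hn0 : 0 ≤ n :=
    le_trans (mul_nonneg (mul_nonneg hs0.le (by linarith)) hhm0) hhm_ub
  -- first sum
  have hA : (∑ k ∈ range (m + 1), h k * (1 - ((k : ℝ) - 1) / (4 * s))) ≤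
      ((m:ℝ) + 1) * (h m * (1 + 1 / (4 * s))) := by
    have hterm : ∀ k ∈ range (m + 1), h k * (1 - ((k : ℝ) - 1) / (4 * s)) ≤
        h m * (1 + 1 / (4 * s)) := by
      intro k hk
      simp only [Finset.mem_range] at hk
      have hkm : k ≤ m := by omega
      have hhk : h k ≤ h m := hmono k m hkm hmd2
      have hkr : (k:ℝ) ≤ (m:ℝ) := by exact_mod_cast hkm
      have hf0 : 0 ≤ 1 - ((k : ℝ) - 1) / (4 * s) := by
        rw [sub_nonneg, div_le_one (by linarith)]
        linarith
      have hf1 : 1 - ((k : ℝ) - 1) / (4 * s) ≤ 1 + 1 / (4 * s) := by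
        have : (-1 : ℝ) / (4 * s) ≤ ((k : ℝ) - 1) / (4 * s) := by
          apply div_le_div_of_nonneg_right _ (by linarith)
          · have : (0:ℝ) ≤ (k:ℝ) := Nat.cast_nonneg k
            linarith
        have e : (1 : ℝ) + 1 / (4 * s) = 1 - (-1) / (4 * s) := by ring
        rw [e]
        linarith
      exact mul_le_mul hhk hf1 hf0 hhm0
    calc (∑ k ∈ range (m + 1), h k * (1 - ((k : ℝ) - 1) / (4 * s)))
        ≤ ∑ _k ∈ range (m + 1), h m * (1 + 1 / (4 * s)) := Finset.sum_le_sum hterm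
      _ = ((m:ℝ) + 1) * (h m * (1 + 1 / (4 * s))) := by
          rw [Finset.sum_const, Finset.card_range, nsmul_eq_mul]; push_cast; ring
  have hA4 : (∑ k ∈ range (m + 1), h k * (1 - ((k : ℝ) - 1) / (4 * s))) ≤ 4 * s * h m := by
    refine hA.trans ?_
    have hfac : 0 ≤ h m * (1 + 1 / (4 * s)) := by positivity
    have h1 : ((m:ℝ) + 1) * (h m * (1 + 1 / (4 * s))) ≤
        (4 * s - 2) * (h m * (1 + 1 / (4 * s))) :=
      mul_le_mul_of_nonneg_right (by linarith) hfac
    have h2 : (4 * s - 2) * (h m * (1 + 1 / (4 * s))) ≤ 4 * s * h m := by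
      have e : (4 * s - 2) * (h m * (1 + 1 / (4 * s))) =
          4 * s * h m - h m - h m / (2 * s) := by
        field_simp
        ring
      have hpos : 0 ≤ h m / (2 * s) := by positivity
      rw [e]; linarith
    linarith
  have h4s : 4 * s * h m ≤ 12 * n / s := by
    rw [le_div_iff₀ hs0]
    nlinarith [mul_nonneg (mul_nonneg hs0.le hhm0) (by linarith : (0:ℝ) ≤ s - 12)]
  -- second sum
  have hB : (∑ k ∈ Icc (m + 1) d, h k / s) ≤ n / s := by
    rw [← Finset.sum_div, hn]
    apply (div_le_div_iff_of_pos_right hs0).mpr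
    apply Finset.sum_le_sum_of_subset_of_nonneg
    · intro x hx
      simp only [Finset.mem_Icc] at hx
      simp only [Finset.mem_range]
      omega
    · intro i hi _
      exact hh i (by simp only [Finset.mem_range] at hi; omega)
  have e13 : 13 * n / s = 12 * n / s + n / s := by ring
  linarith
end

section
/- Let π be the Random-Edge walk on a finite acyclic unique-sink digraph with vertex set V of size n, and for each non-sink visited vertex v let S(v) be the set of out-neighbors skipped at v (those w ∈ out(v) with φ(successor of v) < φ(w)). Then the sets S(v), over distinct vertices v on π, are pairwise disjoint. -/
open Finset

/-- along a directed walk `π 0, π 1, …, π m` of the Random-Edge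
algorithm on a finite acyclic unique-sink digraph (arcs decrease the injective
abstract objective function `φ`), the sets
`S(π i) = {w ∈ out (π i) : φ (π (i+1)) < φ w}` of out-neighbors skipped at the
successive vertices are pairwise disjoint. -/
theorem skipped_sets_pairwise_disjoint {V : Type*} [Fintype V] [DecidableEq V]
    (out : V → Finset V) (φ : V → ℝ)
    (hinj : Function.Injective φ)
    (hdec : ∀ v w : V, w ∈ out v → φ w < φ v)
    (hsink : ∃! s : V, out s = ∅)
    (m : ℕ) (π : ℕ → V)
    (hwalk : ∀ i < m, π (i + 1) ∈ out (π i)) :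
    ∀ i j, i < j → j < m →
      Disjoint ((out (π i)).filter (fun w => φ (π (i + 1)) < φ w))
               ((out (π j)).filter (fun w => φ (π (j + 1)) < φ w)) := by
  have mono : ∀ a b : ℕ, a ≤ b → b ≤ m → φ (π b) ≤ φ (π a) := by
    intro a b hab hbm
    induction b with
    | zero => simp_all
    | succ k ih =>
      rcases Nat.lt_or_ge a (k+1) with h | h
      · have hk : φ (π k) ≤ φ (π a) := ih (Nat.lt_succ_iff.mp h) (le_of_lt hbm)
        exact le_trans (le_of_lt (hdec _ _ (hwalk k hbm))) hk
      · have : a = k + 1 := le_antisymm hab h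
        simp [this]
  intro i j hij hjm
  rw [Finset.disjoint_left]
  intro w hw hw'
  simp only [Finset.mem_filter] at hw hw'
  have h1 : φ (π (i+1)) < φ w := hw.2
  have h2 : φ w < φ (π j) := hdec _ _ hw'.1
  have h3 : φ (π j) ≤ φ (π (i+1)) := mono (i+1) j hij (le_of_lt hjm)
  linarith
end

section
/- In a finite acyclic unique-sink digraph in which every vertex has out-degree at most d, suppose vertex v is (t,k)-good and its boundary ∂R_t(v) has q ≥ g elements u_1,...,u_q ordered so that φ(u_1) > ... > φ(u_q). If the Random-Edge walk started at v reaches u_{i*} after t steps, then P[i* = i] ≥ 1/d^t for each i, hence P[i* > q/2] ≥ q/(2d^t) ≥ g/(2d^t). -/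
open Finset

/-- The Random-Edge walk: from a non-sink vertex move to a uniformly random
out-neighbor; a sink stays put. `walkPMF out t v` is the distribution of the
vertex reached after `t` steps starting from `v`. -/
noncomputable def walkPMF {V : Type*} [DecidableEq V] (out : V → Finset V) :
    ℕ → V → PMF V
  | 0, v => PMF.pure v
  | (t + 1), v =>
      if h : (out v).Nonempty then
        (PMF.uniformOfFinset (out v) h).bind (fun w => walkPMF out t w)
      else PMF.pure v

lemma walk_lb {V : Type*} [DecidableEq V] (out : V → Finset V) (d : ℕ)
    (hdeg : ∀ w : V, (out w).card ≤ d) :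
    ∀ (t : ℕ) (v w : V),
      (∃ c : ℕ → V, c 0 = v ∧ c t = w ∧ ∀ j < t, c (j + 1) ∈ out (c j)) →
      (∀ (c : ℕ → V) (j : ℕ), j < t → c 0 = v →
        (∀ l < j, c (l + 1) ∈ out (c l)) → (out (c j)).Nonempty) →
      (1 : ENNReal) / (d : ENNReal) ^ t ≤ walkPMF out t v w := by
  intro t
  induction t with
  | zero =>
    rintro v w ⟨c, h0, ht, _⟩ _
    have hvw : w = v := by rw [← h0, ht]
    subst hvw
    simp [walkPMF]
  | succ t ih =>
    rintro v w ⟨c, h0, ht, hstep⟩ hgood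
    have hne : (out v).Nonempty := by
      have := hgood c 0 (Nat.succ_pos t) h0 (by intro l hl; omega)
      rwa [h0] at this
    have h1 : c 1 ∈ out v := by
      have := hstep 0 (Nat.succ_pos t)
      rwa [h0] at this
    have hIH : (1 : ENNReal) / (d : ENNReal) ^ t ≤ walkPMF out t (c 1) w := by
      refine ih (c 1) w ⟨fun j => c (j + 1), rfl, ht, fun j hj => hstep (j + 1) (by omega)⟩ ?_
      intro c' j hj h0' hsteps'
      have := hgood (fun n => match n with | 0 => v | n + 1 => c' n) (j + 1) (by omega) rfl ?_
      · exact this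
      · intro l hl
        match l with
        | 0 => simpa [h0'] using h1
        | Nat.succ m => exact hsteps' m (by omega)
    rw [walkPMF, dif_pos hne, PMF.bind_apply]
    calc (1 : ENNReal) / (d : ENNReal) ^ (t + 1)
        = (d : ENNReal)⁻¹ * ((1 : ENNReal) / (d : ENNReal) ^ t) := by
          rw [one_div, one_div, pow_succ, ENNReal.mul_inv (by simp) (by simp), mul_comm]
      _ ≤ (PMF.uniformOfFinset (out v) hne) (c 1) * walkPMF out t (c 1) w := by
          refine mul_le_mul' ?_ hIH
          rw [PMF.uniformOfFinset_apply_of_mem hne h1]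
          exact ENNReal.inv_le_inv.2 (by exact_mod_cast hdeg v)
      _ ≤ ∑' a, (PMF.uniformOfFinset (out v) hne) a * walkPMF out t a w :=
          ENNReal.le_tsum (c 1)

/-- in a finite acyclic unique-sink digraph with all out-degrees at
most `d`, let `u 0, …, u (q-1)` be `q ≥ g` distinct boundary vertices of the
`t`-reach of a `(t,k)`-good vertex `v` (each reachable from `v` by a directed
path of length exactly `t`, no sink within distance `t−1`), ordered so that
`φ (u 0) > … > φ (u (q-1))`.  Then the Random-Edge walk started at `v` reaches
each `u i` after `t` steps with probability at least `1/d^t`; hence the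
probability that the reached index `i*` satisfies `i* > q/2` is at least
`q/(2d^t) ≥ g/(2d^t)`. -/
theorem randomEdge_reach_boundary {V : Type*} [Fintype V] [DecidableEq V]
    (out : V → Finset V) (φ : V → ℝ) (d t q g : ℕ)
    (hd : 1 ≤ d)
    (hdeg : ∀ w : V, (out w).card ≤ d)
    (hinj : Function.Injective φ)
    (hdec : ∀ v w : V, w ∈ out v → φ w < φ v)
    (hsink : ∃! s : V, out s = ∅)
    (v : V) (hg : g ≤ q)
    (u : Fin q → V) (huinj : Function.Injective u)
    (horder : ∀ i j : Fin q, i < j → φ (u j) < φ (u i))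
    (hbd : ∀ i : Fin q, ∃ c : ℕ → V, c 0 = v ∧ c t = u i ∧
      ∀ j < t, c (j + 1) ∈ out (c j))
    (hgood : ∀ (c : ℕ → V) (j : ℕ), j < t → c 0 = v →
      (∀ l < j, c (l + 1) ∈ out (c l)) → (out (c j)).Nonempty) :
    (∀ i : Fin q, (1 : ENNReal) / (d : ENNReal) ^ t ≤ walkPMF out t v (u i)) ∧
    (q : ENNReal) / (2 * (d : ENNReal) ^ t) ≤
      (walkPMF out t v).toOuterMeasure
        {x : V | ∃ i : Fin q, (q : ℝ) / 2 < (i : ℕ) + 1 ∧ x = u i} ∧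
    (g : ENNReal) / (2 * (d : ENNReal) ^ t) ≤
      (walkPMF out t v).toOuterMeasure
        {x : V | ∃ i : Fin q, (q : ℝ) / 2 < (i : ℕ) + 1 ∧ x = u i} := by
  have h1 : ∀ i : Fin q, (1 : ENNReal) / (d : ENNReal) ^ t ≤ walkPMF out t v (u i) :=
    fun i => walk_lb out d hdeg t v (u i) (hbd i) hgood
  -- the real condition is equivalent to a nat condition
  have hcond : ∀ i : Fin q, ((q : ℝ) / 2 < (i : ℕ) + 1) ↔ (q / 2 ≤ (i : ℕ)) := by
    intro i
    rw [div_lt_iff₀ (by norm_num : (0:ℝ) < 2)]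
    constructor
    · intro h
      have : q < ((i : ℕ) + 1) * 2 := by exact_mod_cast h
      omega
    · intro h
      have : q < ((i : ℕ) + 1) * 2 := by omega
      exact_mod_cast this
  set S : Set V := {x : V | ∃ i : Fin q, (q : ℝ) / 2 < (i : ℕ) + 1 ∧ x = u i} with hS
  set F : Finset (Fin q) := Finset.univ.filter (fun i : Fin q => q / 2 ≤ (i : ℕ)) with hF
  have hFcard : F.card = q - q / 2 := by
    rw [show q - q / 2 = (Finset.Ico (q / 2) q).card by rw [Nat.card_Ico]]
    refine Finset.card_bij (fun a _ => (a : ℕ)) ?_ ?_ ?_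
    · intro a ha
      rw [Finset.mem_Ico]
      exact ⟨(Finset.mem_filter.1 ha).2, a.isLt⟩
    · intro a _ b _ h
      exact Fin.val_injective h
    · intro b hb
      rw [Finset.mem_Ico] at hb
      exact ⟨⟨b, hb.2⟩, Finset.mem_filter.2 ⟨Finset.mem_univ _, hb.1⟩, rfl⟩
  have hmem : ∀ i ∈ F, u i ∈ S := by
    intro i hi
    exact ⟨i, (hcond i).2 (Finset.mem_filter.1 hi).2, rfl⟩
  have key : (F.card : ENNReal) * ((1 : ENNReal) / (d : ENNReal) ^ t) ≤
      (walkPMF out t v).toOuterMeasure S := by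
    rw [PMF.toOuterMeasure_apply]
    calc (F.card : ENNReal) * ((1 : ENNReal) / (d : ENNReal) ^ t)
        = ((F.image u).card : ENNReal) * ((1 : ENNReal) / (d : ENNReal) ^ t) := by
          rw [Finset.card_image_of_injective _ huinj]
      _ = (F.image u).card • ((1 : ENNReal) / (d : ENNReal) ^ t) :=
          (nsmul_eq_mul _ _).symm
      _ ≤ ∑ x ∈ F.image u, S.indicator (walkPMF out t v) x := by
          refine Finset.card_nsmul_le_sum _ _ _ ?_
          intro x hx
          obtain ⟨i, hi, rfl⟩ := Finset.mem_image.1 hx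
          rw [Set.indicator_of_mem (hmem i hi)]
          exact h1 i
      _ ≤ ∑' x, S.indicator (walkPMF out t v) x :=
          ENNReal.sum_le_tsum _
  have h2N : q ≤ 2 * F.card := by rw [hFcard]; omega
  have hq : (q : ENNReal) / (2 * (d : ENNReal) ^ t) ≤
      (walkPMF out t v).toOuterMeasure S := by
    refine le_trans ?_ key
    rw [mul_one_div]
    calc (q : ENNReal) / (2 * (d : ENNReal) ^ t)
        ≤ (2 * (F.card : ENNReal)) / (2 * (d : ENNReal) ^ t) := by
          refine ENNReal.div_le_div_right ?_ _
          exact_mod_cast h2N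
      _ = (F.card : ENNReal) / (d : ENNReal) ^ t :=
          ENNReal.mul_div_mul_left _ _ (by norm_num) (by norm_num)
  refine ⟨h1, hq, le_trans (ENNReal.div_le_div_right (by exact_mod_cast hg) _) hq⟩
end

section
/- Let γ(t,k) be defined for the d-cube as the minimum over vertices v and (t,k)-neighborhoods N of v of |{w ∈ N : dist(v,w) = t}|. Then γ(1,k) = k, and for t ≥ 2, γ(t,k) ≥ (k/t)·(γ(t−1,k) − C(d−1, t−2)). -/
open Finset

/-- `IsNbhd d k t v N`: `N` is a `(t,k)`-neighborhood of the vertex `v` of the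
`d`-cube: `{v}` for `t = 0`; otherwise a union of `(t−1,k)`-neighborhoods of
`k` distinct graph-neighbors of `v`. -/
def IsNbhd (d k : ℕ) : ℕ → (Fin d → Bool) → Finset (Fin d → Bool) → Prop
  | 0, v, N => N = {v}
  | (t + 1), v, N =>
      ∃ W : Finset (Fin d → Bool), W.card = k ∧
        (∀ w ∈ W, hammingDist v w = 1) ∧
        ∃ f : (Fin d → Bool) → Finset (Fin d → Bool),
          (∀ w ∈ W, IsNbhd d k t w (f w)) ∧ N = W.biUnion f

/-- `gam d t k` = `γ(t,k)`: the minimum, over vertices `v` of the `d`-cube and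
`(t,k)`-neighborhoods `N` of `v`, of `|{w ∈ N : dist(v,w) = t}|`. -/
noncomputable def gam (d t k : ℕ) : ℕ :=
  sInf {m : ℕ | ∃ (v : Fin d → Bool) (N : Finset (Fin d → Bool)),
    IsNbhd d k t v N ∧ m = (N.filter (fun w => hammingDist v w = t)).card}

variable {d k : ℕ}

def dif (v x : Fin d → Bool) : Finset (Fin d) := Finset.univ.filter fun i => v i ≠ x i

lemma hd_eq (v x : Fin d → Bool) : hammingDist v x = (dif v x).card := rfl

lemma dif_inj {v x y : Fin d → Bool} (h : dif v x = dif v y) : x = y := by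
  funext i
  have := congrArg (i ∈ ·) h
  simp only [dif, mem_filter, mem_univ, true_and, eq_iff_iff] at this
  revert this; cases v i <;> cases x i <;> cases y i <;> simp

lemma dif_symm (v x : Fin d → Bool) : dif v x = dif x v := by ext i; simp [dif, ne_comm]

lemma dif_tri (v w x : Fin d → Bool) : dif v x = symmDiff (dif v w) (dif w x) := by
  ext i
  simp only [dif, Finset.mem_symmDiff, mem_filter, mem_univ, true_and]
  cases v i <;> cases w i <;> cases x i <;> simp

lemma card_sd_singleton (j : Fin d) (S : Finset (Fin d)) :
    (symmDiff ({j} : Finset (Fin d)) S).card = if j ∈ S then S.card - 1 else S.card + 1 := by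
  by_cases h : j ∈ S
  · have : symmDiff ({j} : Finset (Fin d)) S = S.erase j := by
      ext i
      simp only [Finset.mem_symmDiff, mem_singleton, mem_erase]
      constructor
      · rintro (⟨rfl, hi⟩ | ⟨hi, hij⟩); · exact absurd h hi
        exact ⟨hij, hi⟩
      · rintro ⟨hij, hi⟩; exact Or.inr ⟨hi, hij⟩
    rw [this, card_erase_of_mem h, if_pos h]
  · have : symmDiff ({j} : Finset (Fin d)) S = insert j S := by
      ext i
      simp only [Finset.mem_symmDiff, mem_singleton, mem_insert]
      constructor
      · rintro (⟨rfl, _⟩ | ⟨hi, _⟩); exacts [Or.inl rfl, Or.inr hi]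
      · rintro (rfl | hi); exacts [Or.inl ⟨rfl, h⟩, Or.inr ⟨hi, fun e => h (e ▸ hi)⟩]
    rw [this, card_insert_of_notMem h, if_neg h]

lemma dist_cases {v w x : Fin d → Bool} {s : ℕ}
    (hvw : hammingDist v w = 1) (hwx : hammingDist w x = s) :
    hammingDist v x = s - 1 ∨ hammingDist v x = s + 1 := by
  obtain ⟨j, hj⟩ := card_eq_one.mp (hd_eq v w ▸ hvw)
  have h1 : hammingDist v x = (symmDiff ({j} : Finset (Fin d)) (dif w x)).card := by
    rw [hd_eq, dif_tri v w x, hj]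
  rw [h1, card_sd_singleton, ← hd_eq, hwx]
  split <;> simp

lemma countA {v w : Fin d → Bool} {s : ℕ} (hs : 1 ≤ s) (hvw : hammingDist v w = 1)
    (M : Finset (Fin d → Bool)) :
    (M.filter fun x => hammingDist w x = s ∧ hammingDist v x = s - 1).card
      ≤ (d - 1).choose (s - 1) := by
  obtain ⟨j, hj⟩ := card_eq_one.mp (hd_eq v w ▸ hvw)
  have hcard : ((Finset.univ.erase j).powersetCard (s-1)).card = (d-1).choose (s-1) := by
    rw [card_powersetCard, card_erase_of_mem (mem_univ j), card_univ, Fintype.card_fin]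
  rw [← hcard]
  apply card_le_card_of_injOn (fun x => dif v x)
  · intro x hx
    simp only [mem_coe, mem_filter] at hx ⊢
    obtain ⟨-, hwx, hvx⟩ := hx
    have hjS : j ∉ dif v x := by
      intro hmem
      have h1 : hammingDist w x = (symmDiff ({j} : Finset (Fin d)) (dif v x)).card := by
        rw [hd_eq, dif_tri w v x, dif_symm w v, hj]
      rw [card_sd_singleton, if_pos hmem, ← hd_eq, hvx] at h1
      omega
    rw [mem_powersetCard]
    exact ⟨fun i hi => mem_erase.mpr ⟨fun e => hjS (e ▸ hi), mem_univ i⟩, (hd_eq v x ▸ hvx)⟩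
  · intro x _ y _ h
    exact dif_inj h

lemma countB {v x : Fin d → Bool} {s : ℕ} (hvx : hammingDist v x = s + 1)
    (W : Finset (Fin d → Bool)) (hW : ∀ w ∈ W, hammingDist v w = 1) :
    (W.filter fun w => hammingDist w x = s).card ≤ s + 1 := by
  have hcard : ((dif v x).powersetCard 1).card = s + 1 := by
    rw [card_powersetCard, ← hd_eq, hvx, Nat.choose_one_right]
  rw [← hcard]
  apply card_le_card_of_injOn (fun w => dif v w)
  · intro w hw
    simp only [mem_coe, mem_filter] at hw ⊢
    obtain ⟨hwW, hwx⟩ := hw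
    obtain ⟨j, hj⟩ := card_eq_one.mp (hd_eq v w ▸ hW w hwW)
    have hjS : j ∈ dif v x := by
      by_contra hmem
      have h1 : hammingDist w x = (symmDiff ({j} : Finset (Fin d)) (dif v x)).card := by
        rw [hd_eq, dif_tri w v x, dif_symm w v, hj]
      rw [card_sd_singleton, if_neg hmem, ← hd_eq, hvx] at h1
      omega
    rw [mem_powersetCard, hj]
    exact ⟨singleton_subset_iff.mpr hjS, card_singleton j⟩
  · intro a _ b _ h
    exact dif_inj h

lemma exists_nbhd (hkd : k ≤ d) : ∀ (t : ℕ) (v : Fin d → Bool), ∃ N, IsNbhd d k t v N := by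
  intro t
  induction t with
  | zero => exact fun v => ⟨{v}, rfl⟩
  | succ t ih =>
    intro v
    obtain ⟨T, -, hT⟩ := Finset.exists_subset_card_eq
      (show k ≤ (Finset.univ : Finset (Fin d)).card by simpa using hkd)
    refine ⟨(T.image fun j => Function.update v j (!v j)).biUnion fun w => (ih w).choose,
      T.image fun j => Function.update v j (!v j), ?_, ?_, fun w => (ih w).choose, ?_, rfl⟩
    · rw [Finset.card_image_of_injective _ ?_, hT]
      intro a b h
      by_contra hab
      have := congrFun h a
      simp only [Function.update_self, Function.update_of_ne hab] at this
      simp at this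
    · intro w hw
      obtain ⟨j, -, rfl⟩ := Finset.mem_image.mp hw
      rw [hd_eq]
      have : dif v (Function.update v j (!v j)) = {j} := by
        ext i
        simp only [dif, mem_filter, mem_univ, true_and, mem_singleton]
        rcases eq_or_ne i j with rfl | hij
        · simp [Function.update_self]
        · simp [Function.update_of_ne hij, hij]
      rw [this, card_singleton]
    · exact fun w _ => (ih w).choose_spec

lemma gam_one (hkd : k ≤ d) : gam d 1 k = k := by
  have key : ∀ m ∈ {m : ℕ | ∃ (v : Fin d → Bool) (N : Finset (Fin d → Bool)),
      IsNbhd d k 1 v N ∧ m = (N.filter (fun w => hammingDist v w = 1)).card}, m = k := by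
    rintro m ⟨v, N, ⟨W, hWcard, hWdist, f, hf, rfl⟩, rfl⟩
    have hN : W.biUnion f = W := by
      ext x
      simp only [mem_biUnion]
      constructor
      · rintro ⟨w, hw, hx⟩
        have := hf w hw
        rw [show IsNbhd d k 0 w (f w) = (f w = {w}) from rfl] at this
        rw [this, mem_singleton] at hx
        exact hx ▸ hw
      · intro hx
        refine ⟨x, hx, ?_⟩
        have := hf x hx
        rw [show IsNbhd d k 0 x (f x) = (f x = {x}) from rfl] at this
        rw [this]; exact mem_singleton_self x
    rw [hN, filter_true_of_mem hWdist, hWcard]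
  obtain ⟨N, hNb⟩ := exists_nbhd hkd 1 (fun _ => false)
  have hmem : (N.filter (fun w => hammingDist (fun _ => false) w = 1)).card ∈
      {m : ℕ | ∃ (v : Fin d → Bool) (N : Finset (Fin d → Bool)),
      IsNbhd d k 1 v N ∧ m = (N.filter (fun w => hammingDist v w = 1)).card} :=
    ⟨_, N, hNb, rfl⟩
  exact key _ (Nat.sInf_mem ⟨_, hmem⟩)

lemma main_nat (s : ℕ) (hs : 1 ≤ s) (v : Fin d → Bool) (N : Finset (Fin d → Bool))
    (h : IsNbhd d k (s + 1) v N) :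
    k * gam d s k ≤
      (s + 1) * (N.filter fun x => hammingDist v x = s + 1).card + k * (d - 1).choose (s - 1) := by
  obtain ⟨W, hWcard, hWdist, f, hf, rfl⟩ := h
  set F := (W.biUnion f).filter (fun x => hammingDist v x = s + 1) with hF
  set G := fun w => (f w).filter (fun x => hammingDist w x = s ∧ hammingDist v x = s + 1) with hG
  have step1 : ∀ w ∈ W, gam d s k ≤ (G w).card + (d - 1).choose (s - 1) := by
    intro w hw
    have hsub : (f w).filter (fun x => hammingDist w x = s) ⊆
        G w ∪ (f w).filter (fun x => hammingDist w x = s ∧ hammingDist v x = s - 1) := by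
      intro x hx
      simp only [mem_filter] at hx
      rcases dist_cases (hWdist w hw) hx.2 with h1 | h1
      · exact mem_union_right _ (mem_filter.mpr ⟨hx.1, hx.2, h1⟩)
      · exact mem_union_left _ (mem_filter.mpr ⟨hx.1, hx.2, h1⟩)
    calc gam d s k ≤ ((f w).filter (fun x => hammingDist w x = s)).card :=
          Nat.sInf_le ⟨w, f w, hf w hw, rfl⟩
      _ ≤ (G w ∪ (f w).filter (fun x => hammingDist w x = s ∧ hammingDist v x = s - 1)).card :=
          card_le_card hsub
      _ ≤ (G w).card + ((f w).filter (fun x => hammingDist w x = s ∧ hammingDist v x = s - 1)).card :=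
          card_union_le _ _
      _ ≤ (G w).card + (d - 1).choose (s - 1) := by
          gcongr
          exact countA hs (hWdist w hw) (f w)
  have hGF : ∀ w ∈ W, G w ⊆ F := by
    intro w hw x hx
    simp only [hG, mem_filter] at hx
    exact mem_filter.mpr ⟨mem_biUnion.mpr ⟨w, hw, hx.1⟩, hx.2.2⟩
  have step2 : ∑ w ∈ W, (G w).card ≤ (s + 1) * F.card := by
    have hcardG : ∀ w ∈ W, (G w).card = ∑ x ∈ F, if x ∈ G w then 1 else 0 := by
      intro w hw
      rw [← card_filter]
      congr 1
      ext x
      simp only [mem_filter]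
      exact ⟨fun h => ⟨hGF w hw h, h⟩, fun h => h.2⟩
    calc ∑ w ∈ W, (G w).card = ∑ w ∈ W, ∑ x ∈ F, if x ∈ G w then 1 else 0 :=
          Finset.sum_congr rfl hcardG
      _ = ∑ x ∈ F, ∑ w ∈ W, if x ∈ G w then 1 else 0 := Finset.sum_comm
      _ ≤ ∑ x ∈ F, (s + 1) := by
          apply Finset.sum_le_sum
          intro x hx
          rw [← card_filter]
          have hvx : hammingDist v x = s + 1 := (mem_filter.mp hx).2
          calc (W.filter fun w => x ∈ G w).card
              ≤ (W.filter fun w => hammingDist w x = s).card := by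
                apply card_le_card
                intro w hw
                simp only [hG, mem_filter] at hw ⊢
                exact ⟨hw.1, hw.2.2.1⟩
            _ ≤ s + 1 := countB hvx W hWdist
      _ = (s + 1) * F.card := by rw [Finset.sum_const, smul_eq_mul, mul_comm]
  calc k * gam d s k = ∑ _w ∈ W, gam d s k := by rw [Finset.sum_const, hWcard, smul_eq_mul]
    _ ≤ ∑ w ∈ W, ((G w).card + (d - 1).choose (s - 1)) := Finset.sum_le_sum step1
    _ = (∑ w ∈ W, (G w).card) + k * (d - 1).choose (s - 1) := by
        rw [Finset.sum_add_distrib, Finset.sum_const, hWcard, smul_eq_mul]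
    _ ≤ (s + 1) * F.card + k * (d - 1).choose (s - 1) := by gcongr


/-- `γ(1,k) = k` and, for `t ≥ 2`,
`γ(t,k) ≥ (k/t)·(γ(t−1,k) − C(d−1,t−2))`. -/
theorem gamma_recursion (d k : ℕ) (hk : 1 ≤ k) (hkd : k ≤ d) :
    gam d 1 k = k ∧
    ∀ t : ℕ, 2 ≤ t →
      ((k : ℝ) / t) * ((gam d (t - 1) k : ℝ) - ((d - 1).choose (t - 2) : ℝ)) ≤
        (gam d t k : ℝ) := by
  refine ⟨gam_one hkd, ?_⟩
  intro t ht
  obtain ⟨s, rfl⟩ : ∃ s, t = s + 1 := ⟨t - 1, by omega⟩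
  have hs : 1 ≤ s := by omega
  obtain ⟨N0, hN0⟩ := exists_nbhd hkd (s + 1) (fun _ => false)
  obtain ⟨v, N, hN, hEq⟩ := Nat.sInf_mem (⟨_, (fun _ => false), N0, hN0, rfl⟩ :
    Set.Nonempty {m : ℕ | ∃ (v : Fin d → Bool) (N : Finset (Fin d → Bool)),
      IsNbhd d k (s + 1) v N ∧ m = (N.filter (fun w => hammingDist v w = s + 1)).card})
  have hEq' : gam d (s + 1) k = (N.filter (fun w => hammingDist v w = s + 1)).card := hEq
  have hnat := main_nat s hs v N hN
  rw [← hEq'] at hnat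
  have h1 : (s + 1 : ℕ) - 1 = s := rfl
  have h2 : (s + 1 : ℕ) - 2 = s - 1 := rfl
  rw [h1, h2]
  rw [div_mul_eq_mul_div, div_le_iff₀ (by push_cast; positivity)]
  have hcast : (k : ℝ) * (gam d s k : ℝ) ≤
      ((s : ℝ) + 1) * (gam d (s + 1) k : ℝ) + (k : ℝ) * ((d - 1).choose (s - 1) : ℝ) := by
    exact_mod_cast hnat
  push_cast
  linarith
end

section
/- Let n, d ∈ ℕ with d ≥ 2, and let h_0 = h_d = 1 and h_k = (n−2)/(d−1) for 1 ≤ k ≤ d−1 (so ∑_{k=0}^d h_k = n). Then for these values, max{ ∑_{k=0}^d x_k : ∑_{k=0}^d ((k+3)/4)·x_k = n, 0 ≤ x_k ≤ h_k } = Ω(n/√d); i.e., there is a feasible x with ∑ x_k ≥ c·n/√d for an absolute constant c > 0. -/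
open Finset

lemma sum_wt (m : ℕ) : ∑ k ∈ Icc 1 m, ((k:ℝ)+3) = m*(m+7)/2 := by
  induction m with
  | zero => simp
  | succ m ih =>
    rw [Finset.sum_Icc_succ_top (by omega)]
    rw [ih]; push_cast; ring

set_option maxHeartbeats 2000000 in
/-- for the `h`-vector of the dual of a stacked polytope
(`h_0 = h_d = 1`, `h_k = (n−2)/(d−1)` for `1 ≤ k ≤ d−1`, so `∑ h_k = n`), the
linear program `max {∑ x_k : ∑ ((k+3)/4)·x_k = n, 0 ≤ x_k ≤ h_k}` has value
`Ω(n/√d)`: there is an absolute constant `c > 0` such that for all `d ≥ 2` and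
`n ≥ 2` some feasible `x` satisfies `∑ x_k ≥ c·n/√d`. -/
theorem stacked_dual_lp_lower_bound :
    ∃ c : ℝ, 0 < c ∧
      ∀ d n : ℕ, 2 ≤ d → 2 ≤ n →
        ∀ h : ℕ → ℝ,
          (h 0 = 1) → (h d = 1) →
          (∀ k, 1 ≤ k → k ≤ d - 1 → h k = ((n : ℝ) - 2) / ((d : ℝ) - 1)) →
          ∃ x : ℕ → ℝ,
            (∀ k ≤ d, 0 ≤ x k ∧ x k ≤ h k) ∧
            (∑ k ∈ range (d + 1), ((k : ℝ) + 3) / 4 * x k = n) ∧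
            c * n / Real.sqrt d ≤ ∑ k ∈ range (d + 1), x k := by
  refine ⟨1/4, by norm_num, ?_⟩
  intro d n hd hn h h0 hdd hmid
  set s := Nat.sqrt d with hs
  set m := min (d-1) (6*s) with hm
  have hm1 : 1 ≤ m := by
    have : 1 ≤ s := Nat.sqrt_pos.mpr (by omega)
    omega
  have hmd : m ≤ d - 1 := min_le_left _ _
  have hmlt : m < d := by omega
  have hd2 : (2:ℝ) ≤ (d:ℝ) := by exact_mod_cast hd
  have hn2 : (2:ℝ) ≤ (n:ℝ) := by exact_mod_cast hn
  have hdpos : (0:ℝ) < (d:ℝ) - 1 := by linarith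
  set A : ℝ := ((n:ℝ)-2)/((d:ℝ)-1) with hA
  have hA0 : 0 ≤ A := div_nonneg (by linarith) hdpos.le
  have hAd : A * ((d:ℝ)-1) = (n:ℝ) - 2 := div_mul_cancel₀ _ hdpos.ne'
  set Q : ℝ := A * ((m:ℝ)*((m:ℝ)+7))/8 with hQ
  have hQ0 : 0 ≤ Q := by
    apply div_nonneg _ (by norm_num)
    exact mul_nonneg hA0 (by positivity)
  have hmcast : m = d - 1 → ((m:ℝ)) = (d:ℝ) - 1 := by
    intro he; rw [he]; push_cast [Nat.cast_sub (by omega : 1 ≤ d)]; ring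
  -- KEY feasibility inequality
  have key : (n:ℝ) ≤ ((d:ℝ)+6)/4 + Q := by
    rcases le_or_gt (d-1) (6*s) with hc | hc
    · have he : m = d - 1 := by omega
      have hmr : ((m:ℝ)) = (d:ℝ) - 1 := hmcast he
      have hq2 : Q = ((n:ℝ)-2) * ((d:ℝ)+6)/8 := by
        rw [hQ, hmr]; linear_combination (((d:ℝ)+6)/8) * hAd
      rw [hq2]; nlinarith
    · have he : m = 6*s := by omega
      have h1 : d < (s+1)*(s+1) := by
        have := Nat.lt_succ_sqrt' d
        rwa [pow_two] at this
      have h1r : (d:ℝ) < ((s:ℝ)+1)*((s:ℝ)+1) := by exact_mod_cast h1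
      have hmr : (m:ℝ) = 6*(s:ℝ) := by exact_mod_cast he
      have hs0 : (0:ℝ) ≤ (s:ℝ) := Nat.cast_nonneg s
      have hcast : 16*((d:ℝ)-1) ≤ (m:ℝ)*((m:ℝ)+7) := by
        rw [hmr]; nlinarith
      have h2 : 2*((n:ℝ)-2) ≤ Q := by
        rw [hQ]
        have := mul_le_mul_of_nonneg_left hcast hA0
        nlinarith
      linarith
  -- sqrt facts
  set sd : ℝ := Real.sqrt d with hsd
  have sd0 : (0:ℝ) < sd := Real.sqrt_pos.mpr (by linarith)
  have sdsq : sd * sd = (d:ℝ) := Real.mul_self_sqrt (by linarith)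
  have sd1 : (1:ℝ) ≤ sd := by nlinarith
  have sdled : sd ≤ (d:ℝ) := by nlinarith
  have hsled : (s:ℝ) ≤ sd := by
    have h1 : (s*s : ℕ) ≤ d := by have := Nat.sqrt_le' d; rwa [pow_two] at this
    have h1r : (s:ℝ)*(s:ℝ) ≤ (d:ℝ) := by exact_mod_cast h1
    have hs0 : (0:ℝ) ≤ (s:ℝ) := Nat.cast_nonneg s
    nlinarith
  have hmu : (m:ℝ) ≤ 6*sd := by
    have h1 : m ≤ 6*s := min_le_right _ _
    have h1r : (m:ℝ) ≤ 6*(s:ℝ) := by exact_mod_cast h1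
    linarith
  have hml : sd/2 ≤ (m:ℝ) := by
    rcases le_or_gt (d-1) (6*s) with hc | hc
    · have hmr : ((m:ℝ)) = (d:ℝ) - 1 := hmcast (by omega)
      rw [hmr]; linarith
    · have he : m = 6*s := by omega
      have h1 : d < (s+1)*(s+1) := by
        have := Nat.lt_succ_sqrt' d
        rwa [pow_two] at this
      have h1r : (d:ℝ) < ((s:ℝ)+1)*((s:ℝ)+1) := by exact_mod_cast h1
      have hs0 : (0:ℝ) ≤ (s:ℝ) := Nat.cast_nonneg s
      have hsd1 : sd < (s:ℝ)+1 := by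
        by_contra hcon
        push_neg at hcon
        have h2 : ((s:ℝ)+1)*((s:ℝ)+1) ≤ sd*sd := mul_le_mul hcon hcon (by linarith) sd0.le
        rw [sdsq] at h2; linarith
      have hs1 : (1:ℝ) ≤ (s:ℝ) := by
        exact_mod_cast Nat.one_le_cast.mpr (Nat.sqrt_pos.mpr (by omega : 0 < d))
      have hmr : (m:ℝ) = 6*(s:ℝ) := by exact_mod_cast he
      rw [hmr]; nlinarith
  -- the scaling factor t and leftover β
  set t : ℝ := if Q ≤ (n:ℝ) - 3/4 then 1 else ((n:ℝ)-3/4)/Q with ht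
  have ht0 : 0 ≤ t := by
    rw [ht]; split
    · norm_num
    · next hq => exact div_nonneg (by linarith) hQ0
  have ht1 : t ≤ 1 := by
    rw [ht]; split
    · exact le_refl 1
    · next hq =>
      push_neg at hq
      exact le_of_lt (div_lt_one (by linarith) |>.mpr hq)
  have htQ_le : t*Q ≤ (n:ℝ) - 3/4 := by
    rw [ht]; split
    · next hq => linarith
    · next hq =>
      push_neg at hq
      rw [div_mul_cancel₀ _ (by linarith : Q ≠ 0)]
  have htQ_ge : (n:ℝ) - 3/4 - t*Q ≤ ((d:ℝ)+3)/4 := by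
    rw [ht]; split
    · next hq => linarith
    · next hq =>
      push_neg at hq
      rw [div_mul_cancel₀ _ (by linarith : Q ≠ 0)]
      linarith
  have hd3 : (0:ℝ) < (d:ℝ)+3 := by linarith
  set β : ℝ := ((n:ℝ) - 3/4 - t*Q) * 4/((d:ℝ)+3) with hβ
  have hβ0 : 0 ≤ β := by
    apply div_nonneg _ hd3.le
    nlinarith
  have hβ1 : β ≤ 1 := by
    rw [hβ, div_le_one hd3]; linarith
  -- the feasible point
  refine ⟨fun k => if k = 0 then 1 else if k = d then β else if k ≤ m then t*A else 0,
    ?_, ?_, ?_⟩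
  · -- feasibility
    intro k hk
    by_cases hk0 : k = 0
    · simp [hk0, h0]
    · by_cases hkd : k = d
      · subst hkd
        simp only []
        split_ifs <;> first | omega | (rw [hdd]; exact ⟨hβ0, hβ1⟩)
      · have hk1 : 1 ≤ k := by omega
        have hkd1 : k ≤ d - 1 := by omega
        have hhk : h k = A := hmid k hk1 hkd1
        by_cases hkm : k ≤ m
        · simp only [hk0, hkd, hkm, if_true, if_false, if_neg hk0, if_neg hkd]
          constructor
          · exact mul_nonneg ht0 hA0
          · rw [hhk]
            calc t*A ≤ 1*A := mul_le_mul_of_nonneg_right ht1 hA0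
            _ = A := one_mul A
        · simp only [hk0, hkd, hkm, if_false, if_neg hk0, if_neg hkd]
          exact ⟨le_refl 0, by rw [hhk]; exact hA0⟩
  · -- the constraint
    have hdecomp : ∀ f : ℕ → ℝ, ∑ k ∈ range (d+1), f k
        = f 0 + f d + ∑ k ∈ Icc 1 (d-1), f k := by
      intro f
      have hset : range (d+1) = insert 0 (insert d (Icc 1 (d-1))) := by
        ext k; simp only [Finset.mem_range, Finset.mem_insert, Finset.mem_Icc]; omega
      rw [hset, Finset.sum_insert (by simp only [Finset.mem_insert, Finset.mem_Icc]; omega),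
        Finset.sum_insert (by simp only [Finset.mem_Icc]; omega)]
      ring
    rw [hdecomp]
    have hx0 : (if (0:ℕ) = 0 then (1:ℝ) else if (0:ℕ) = d then β else if 0 ≤ m then t*A else 0) = 1 := by
      simp
    have hmid_eq : ∑ k ∈ Icc 1 (d-1),
        ((k:ℝ)+3)/4 * (if k = 0 then 1 else if k = d then β else if k ≤ m then t*A else 0)
        = t*Q := by
      rw [← Finset.sum_subset (Finset.Icc_subset_Icc_right hmd : Icc 1 m ⊆ Icc 1 (d-1))]
      · calc ∑ k ∈ Icc 1 m, ((k:ℝ)+3)/4 * (if k = 0 then 1 else if k = d then β else if k ≤ m then t*A else 0)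
            = ∑ k ∈ Icc 1 m, ((k:ℝ)+3) * (t*A/4) := by
              apply Finset.sum_congr rfl
              intro k hk
              simp only [Finset.mem_Icc] at hk
              rw [if_neg (by omega), if_neg (by omega), if_pos hk.2]
              ring
          _ = ((m:ℝ)*((m:ℝ)+7)/2) * (t*A/4) := by rw [← Finset.sum_mul, sum_wt]
          _ = t*Q := by rw [hQ]; ring
      · intro k hk hk2
        simp only [Finset.mem_Icc] at hk hk2
        rw [if_neg (by omega), if_neg (by omega), if_neg (by omega)]
        ring
    rw [hmid_eq]
    simp only [if_pos rfl, if_neg (by omega : d ≠ 0)]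
    have : ((d:ℝ)+3)/4 * β = (n:ℝ) - 3/4 - t*Q := by
      rw [hβ]; field_simp
    push_cast
    rw [this]
    ring
  · -- the value bound
    have hdecomp : ∀ f : ℕ → ℝ, ∑ k ∈ range (d+1), f k
        = f 0 + f d + ∑ k ∈ Icc 1 (d-1), f k := by
      intro f
      have hset : range (d+1) = insert 0 (insert d (Icc 1 (d-1))) := by
        ext k; simp only [Finset.mem_range, Finset.mem_insert, Finset.mem_Icc]; omega
      rw [hset, Finset.sum_insert (by simp only [Finset.mem_insert, Finset.mem_Icc]; omega),
        Finset.sum_insert (by simp only [Finset.mem_Icc]; omega)]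
      ring
    rw [hdecomp]
    have hmid_eq : ∑ k ∈ Icc 1 (d-1),
        (if k = 0 then (1:ℝ) else if k = d then β else if k ≤ m then t*A else 0)
        = (m:ℝ)*(t*A) := by
      rw [← Finset.sum_subset (Finset.Icc_subset_Icc_right hmd : Icc 1 m ⊆ Icc 1 (d-1))]
      · calc ∑ k ∈ Icc 1 m, (if k = 0 then (1:ℝ) else if k = d then β else if k ≤ m then t*A else 0)
            = ∑ _k ∈ Icc 1 m, t*A := by
              apply Finset.sum_congr rfl
              intro k hk
              simp only [Finset.mem_Icc] at hk
              rw [if_neg (by omega), if_neg (by omega), if_pos hk.2]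
          _ = (m:ℝ)*(t*A) := by
              rw [Finset.sum_const, Nat.card_Icc, (by omega : m + 1 - 1 = m), nsmul_eq_mul]
      · intro k hk hk2
        simp only [Finset.mem_Icc] at hk hk2
        rw [if_neg (by omega), if_neg (by omega), if_neg (by omega)]
    rw [hmid_eq]
    have hgoal : 1/4*(n:ℝ)/sd ≤ 1 + (m:ℝ)*(t*A) := by
      rw [ht]; split
      · next hq =>
        -- t = 1 case
        rw [div_le_iff₀ sd0]
        have h1 : sd/2 * (A*sd) ≤ (m:ℝ) * (A*sd) :=
          mul_le_mul_of_nonneg_right hml (mul_nonneg hA0 sd0.le)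
        nlinarith
      · next hq =>
        push_neg at hq
        have hQpos : 0 < Q := by linarith
        have hApos : 0 < A := by
          rcases lt_or_eq_of_le hA0 with hlt | heq2
          · exact hlt
          · rw [hQ, ← heq2] at hQpos
            norm_num at hQpos
        have hm0 : (0:ℝ) < (m:ℝ) := by exact_mod_cast hm1
        have heq : (m:ℝ)*(((n:ℝ)-3/4)/Q*A) = 8*((n:ℝ)-3/4)/((m:ℝ)+7) := by
          rw [hQ]
          field_simp
          all_goals ring
        rw [heq]
        have hm13 : (m:ℝ)+7 ≤ 13*sd := by linarith
        have hm7 : (0:ℝ) < (m:ℝ)+7 := by linarith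
        have hstep : 1/4*(n:ℝ)/sd ≤ 8*((n:ℝ)-3/4)/((m:ℝ)+7) := by
          rw [div_le_div_iff₀ sd0 hm7]
          nlinarith
        linarith
    split_ifs <;> first | omega | linarith [hgoal, hβ0]
end
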